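/- arXiv:1405.0816 — 6 statements merged into one kernel-verified Lean document; each statement's English description precedes it below -/
import Mathlib

section
/- For every integer r ≥ 1, the following identity holds in ℚ(q): E^(r-1) − P/E + (q−1)^r·(I/(q^3−q)) + (1/2)(q^2−1)^r + (1/6)(q−1)^(2r) + (1/3)(q^2+q+1)^r = (q^8−q^6−q^5+q^3)^(r−1) + (q−1)^(2r−2)·(q^(3r−3) − q^r) + (1/6)(q−1)^(2r−2)·q·(q+1) + (1/2)(q^2−1)^(r−1)·q·(q−1) + (1/3)(q^2+q+1)^(r−1)·q·(q+1) − (q−1)^(r−1)·q^(r−1)·(q^2−1)^(r−1)·(2q^(2r−2) − q), where E = q^8−q^6−q^5+q^3, I = (q^3−q)^r − (1/2)(q^2−q)(q+1)^r − (1/2)(q^2+q)(q−1)^r − (q^(r−1)−1)(q−1)^(r−1)(q^3−q), and P = (1/3)(q^2+q+1)^r(q−1)^2 q^3(q+1) + (q^2+q+1)(2q^(2r)−q^2)(q−1)^(2r) q^r (q+1)^r − (1/3)(q−1)^(2r)(q+1)(q^2+q+1)(3q^(3r) − 3q^(r+2) + q^3). (This is the assembly of the E-polynomial of the SL(3,ℂ)-character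 variety of the free group F_r from the E-polynomials of its irreducible and reducible loci, giving the formula of the main theorem.) -/
/-- The variable `q`, viewed as a rational function in `ℚ(q)`. -/
noncomputable def q : RatFunc ℚ := RatFunc.X

/-- `E = e(SL(3,ℂ))`. -/
noncomputable def E : RatFunc ℚ := q^8 - q^6 - q^5 + q^3

/-- `I = e(R^irr_{r,2})`, the E-polynomial of the space of irreducible
representations of `F_r` in `SL(2,ℂ)`. -/
noncomputable def I (r : ℕ) : RatFunc ℚ :=
  (q^3 - q)^r - (1/2) * (q^2 - q) * (q + 1)^r - (1/2) * (q^2 + q) * (q - 1)^r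
    - (q^(r-1) - 1) * (q - 1)^(r-1) * (q^3 - q)

/-- `P = e(R^red_{r,3})`, the E-polynomial of the space of reducible
representations of `F_r` in `SL(3,ℂ)`. -/
noncomputable def P (r : ℕ) : RatFunc ℚ :=
  (1/3) * (q^2 + q + 1)^r * (q - 1)^2 * q^3 * (q + 1)
    + (q^2 + q + 1) * (2 * q^(2*r) - q^2) * (q - 1)^(2*r) * q^r * (q + 1)^r
    - (1/3) * (q - 1)^(2*r) * (q + 1) * (q^2 + q + 1)
        * (3 * q^(3*r) - 3 * q^(r+2) + q^3)

/-!
Write `r = s + 1`. Then `E` divides `P r` and `q ^ 3 - q` divides `I r`, so both quotients in the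
identity are polynomials. After cancelling them and factoring `q ^ 3 - q = q (q - 1) (q + 1)` and
`q ^ 2 - 1 = (q - 1) (q + 1)`, both sides are polynomials in `q`, `q ^ s`, `(q - 1) ^ s`,
`(q + 1) ^ s` and `(q ^ 2 + q + 1) ^ s`, and the identity is a ring identity among them.
-/

section

open Polynomial

theorem RatFunc.algebraMap_ne_zero_of_eval_ne_zero {K : Type*} [Field K] {p : K[X]} (a : K)
    (h : p.eval a ≠ 0) : algebraMap K[X] (RatFunc K) p ≠ 0 :=
  RatFunc.algebraMap_ne_zero (ne_of_apply_ne (Polynomial.eval a) (by simpa using h))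

theorem E_ne_zero : E ≠ 0 := by
  have hE : algebraMap ℚ[X] (RatFunc ℚ) (X ^ 8 - X ^ 6 - X ^ 5 + X ^ 3) = E := by
    simp [E, q]
  exact hE ▸ RatFunc.algebraMap_ne_zero_of_eval_ne_zero 2 (by norm_num)

theorem q_pow_three_sub_q_ne_zero : q ^ 3 - q ≠ 0 := by
  have hq : algebraMap ℚ[X] (RatFunc ℚ) (X ^ 3 - X) = q ^ 3 - q := by
    simp [q]
  exact hq ▸ RatFunc.algebraMap_ne_zero_of_eval_ne_zero 2 (by norm_num)

end

theorem P_add_one_eq_E_mul (s : ℕ) : P (s + 1) = E * ((1/3) * (q^2 + q + 1)^s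
      + (2 * q^(2*s) - 1) * q^s * (q - 1)^(2*s) * (q + 1)^s
      - (1/3) * (q - 1)^(2*s) * (3 * q^(3*s) - 3 * q^s + 1)) := by
  unfold P E
  ring

theorem I_add_one_eq_mul (s : ℕ) : I (s + 1) = (q^3 - q) * ((q^3 - q)^s - (1/2) * (q + 1)^s
      - (1/2) * (q - 1)^s - (q^s - 1) * (q - 1)^s) := by
  unfold I
  rw [Nat.add_sub_cancel]
  ring

/-- Assembly of the E-polynomial of the `SL(3,ℂ)`-character variety of the free
group `F_r` from the E-polynomials of its irreducible and reducible loci. -/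
theorem sl3_char_variety_E_polynomial (r : ℕ) (hr : 1 ≤ r) :
    E^(r-1) - P r / E + (q - 1)^r * (I r / (q^3 - q))
      + (1/2) * (q^2 - 1)^r + (1/6) * (q - 1)^(2*r) + (1/3) * (q^2 + q + 1)^r
    = (q^8 - q^6 - q^5 + q^3)^(r-1)
      + (q - 1)^(2*r-2) * (q^(3*r-3) - q^r)
      + (1/6) * (q - 1)^(2*r-2) * q * (q + 1)
      + (1/2) * (q^2 - 1)^(r-1) * q * (q - 1)
      + (1/3) * (q^2 + q + 1)^(r-1) * q * (q + 1)
      - (q - 1)^(r-1) * q^(r-1) * (q^2 - 1)^(r-1) * (2 * q^(2*r-2) - q) := by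
  obtain ⟨s, rfl⟩ := Nat.exists_eq_add_of_le' hr
  rw [P_add_one_eq_E_mul, I_add_one_eq_mul, mul_div_cancel_left₀ _ E_ne_zero,
    mul_div_cancel_left₀ _ q_pow_three_sub_q_ne_zero]
  have h2 : 2 * (s + 1) - 2 = 2 * s := by omega
  have h3 : 3 * (s + 1) - 3 = 3 * s := by omega
  rw [Nat.add_sub_cancel, h2, h3]
  unfold E
  have hq3 : q ^ 3 - q = q * (q - 1) * (q + 1) := by ring
  have hq2 : q ^ 2 - 1 = (q - 1) * (q + 1) := by ring
  simp only [hq3, hq2, mul_pow]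
  ring
end

section
/- For every integer r ≥ 1, the following identity holds in ℚ(q), with E = q^8−q^6−q^5+q^3: 3^r + 3^r(q^r−1)·E/((q−1)^2 q^3) + 3^r(q^r−1)(q^r−q)·E/((q^2−1)(q^2−q)q^2) + 3^r(q^r−1)(q^r−q)·E/((q^2−1)(q^2−q)q^2) + 3^r(q^r−1)^2 q^r·E/((q−1)^2 q^3) = 3^r·(1 + (1+q+q^2)(q^(3r+1) + q^(3r) − 2q^(2r+1) + q − 1)). (This is the computation of the E-polynomial e(R_1) of the stratum of reducible representations of F_r in SL(3,ℂ) whose matrices all have all eigenvalues equal.) -/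
section Field

variable {K : Type*} [Field K] {x : K}

lemma div_sub_one_sq_mul_pow_three (hx0 : x ≠ 0) (hx1 : x ≠ 1) :
    (x^8 - x^6 - x^5 + x^3) / ((x - 1)^2 * x^3) = (x + 1) * (x^2 + x + 1) := by
  have hx1' : x - 1 ≠ 0 := sub_ne_zero.mpr hx1
  rw [div_eq_iff (by positivity)]
  ring

lemma div_sq_sub_one_mul_sq_sub_mul_sq (hx0 : x ≠ 0) (hx1 : x ≠ 1) (hx2 : x ≠ -1) :
    (x^8 - x^6 - x^5 + x^3) / ((x^2 - 1) * (x^2 - x) * x^2) = x^2 + x + 1 := by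
  have hx1' : x - 1 ≠ 0 := sub_ne_zero.mpr hx1
  have hx2' : x + 1 ≠ 0 := by rwa [← sub_neg_eq_add, sub_ne_zero]
  have hden : (x^2 - 1) * (x^2 - x) * x^2 = (x - 1)^2 * (x + 1) * x^3 := by ring
  rw [hden, div_eq_iff (by positivity)]
  ring

theorem e_R1_stratum_of_field (r : ℕ) (hx0 : x ≠ 0) (hx1 : x ≠ 1) (hx2 : x ≠ -1) :
    3^r + 3^r * (x^r - 1) * (x^8 - x^6 - x^5 + x^3) / ((x - 1)^2 * x^3)
      + 3^r * (x^r - 1) * (x^r - x) * (x^8 - x^6 - x^5 + x^3) / ((x^2 - 1) * (x^2 - x) * x^2)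
      + 3^r * (x^r - 1) * (x^r - x) * (x^8 - x^6 - x^5 + x^3) / ((x^2 - 1) * (x^2 - x) * x^2)
      + 3^r * (x^r - 1)^2 * x^r * (x^8 - x^6 - x^5 + x^3) / ((x - 1)^2 * x^3)
    = 3^r * (1 + (1 + x + x^2) * (x^(3*r+1) + x^(3*r) - 2 * x^(2*r+1) + x - 1)) := by
  simp only [mul_div_assoc, div_sub_one_sq_mul_pow_three hx0 hx1,
    div_sq_sub_one_mul_sq_sub_mul_sq hx0 hx1 hx2]
  ring

end Field

lemma q_ne_C (c : ℚ) : q ≠ RatFunc.C c := by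
  rw [q, ← sub_ne_zero, ← RatFunc.algebraMap_X, ← RatFunc.algebraMap_C, ← map_sub]
  exact RatFunc.algebraMap_ne_zero (Polynomial.X_sub_C_ne_zero c)

theorem e_R1_stratum_general (r : ℕ) :
    3^r + 3^r * (q^r - 1) * E / ((q - 1)^2 * q^3)
      + 3^r * (q^r - 1) * (q^r - q) * E / ((q^2 - 1) * (q^2 - q) * q^2)
      + 3^r * (q^r - 1) * (q^r - q) * E / ((q^2 - 1) * (q^2 - q) * q^2)
      + 3^r * (q^r - 1)^2 * q^r * E / ((q - 1)^2 * q^3)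
    = 3^r * (1 + (1 + q + q^2) * (q^(3*r+1) + q^(3*r) - 2 * q^(2*r+1) + q - 1)) :=
  e_R1_stratum_of_field r (by simpa using q_ne_C 0) (by simpa using q_ne_C 1)
    (by simpa using q_ne_C (-1))

/-- Computation of `e(R_1)`, the E-polynomial of the stratum of reducible
representations of `F_r` in `SL(3,ℂ)` whose matrices all have all eigenvalues
equal, as a sum of the substrata `R_{11}, ..., R_{15}`. -/
theorem e_R1_stratum (r : ℕ) (hr : 1 ≤ r) :
    3^r + 3^r * (q^r - 1) * E / ((q - 1)^2 * q^3)
      + 3^r * (q^r - 1) * (q^r - q) * E / ((q^2 - 1) * (q^2 - q) * q^2)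
      + 3^r * (q^r - 1) * (q^r - q) * E / ((q^2 - 1) * (q^2 - q) * q^2)
      + 3^r * (q^r - 1)^2 * q^r * E / ((q - 1)^2 * q^3)
    = 3^r * (1 + (1 + q + q^2) * (q^(3*r+1) + q^(3*r) - 2 * q^(2*r+1) + q - 1)) :=
  e_R1_stratum_general r
end

section
/- For every integer r ≥ 1, the polynomial q^8 − q^6 − q^5 + q^3 divides the polynomial (1/3)(q^2+q+1)^r (q−1)^2 q^3 (q+1) + (q^2+q+1)(2q^(2r)−q^2)(q−1)^(2r) q^r (q+1)^r − (1/3)(q−1)^(2r)(q+1)(q^2+q+1)(3q^(3r) − 3q^(r+2) + q^3) in the polynomial ring ℚ[q]. (This divisibility is needed so that the E-polynomial of the irreducible locus of the SL(3,ℂ)-character variety, obtained by dividing by e(PGL(3,ℂ)) = q^8−q^6−q^5+q^3, is again a polynomial.) -/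
open Polynomial

/-- The E-polynomial `q^8 - q^6 - q^5 + q^3` of `PGL(3,ℂ)` divides the
E-polynomial of the space of reducible representations of the free group `F_r`
in `SL(3,ℂ)`, in the polynomial ring `ℚ[q]`. -/
theorem pgl3_divides_e_reducible (r : ℕ) (hr : 1 ≤ r) :
    (X^8 - X^6 - X^5 + X^3 : Polynomial ℚ) ∣
      (C (1/3 : ℚ) * (X^2 + X + 1)^r * (X - 1)^2 * X^3 * (X + 1)
        + (X^2 + X + 1) * (2 * X^(2*r) - X^2) * (X - 1)^(2*r) * X^r * (X + 1)^r
        - C (1/3 : ℚ) * (X - 1)^(2*r) * (X + 1) * (X^2 + X + 1)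
            * (3 * X^(3*r) - 3 * X^(r+2) + X^3)) := by
  obtain ⟨k, rfl⟩ := Nat.exists_eq_add_of_le' hr
  have factor : (X^8 - X^6 - X^5 + X^3 : Polynomial ℚ)
      = X^3 * (X + 1) * (X - 1)^2 * (X^2 + X + 1) := by ring
  rw [factor]
  refine dvd_sub (dvd_add ?_ ?_) ?_
  · exact ⟨C (1/3 : ℚ) * (X^2 + X + 1)^k, by ring⟩
  · exact ⟨(2 * X^(2*k) - 1) * (X - 1)^(2*k) * X^k * (X + 1)^k, by ring⟩
  · exact ⟨C (1/3 : ℚ) * (X - 1)^(2*k) * (3 * X^(3*k) - 3 * X^k + 1), by ring⟩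
end

section
/- Define on triples (a,b,c) ∈ ℚ(q)^3 the commutative ring structure with componentwise addition, unit (1,0,0), and multiplication (a,b,c)·(a',b',c') = (a a' + b b' + c c', a b' + a' b + c c', a c' + a' c + b c' + b' c + c c'). Then for every integer r ≥ 0, the r-th power of the element (q^2, 1, −q) in this ring equals ((1/2)(q^2−1)^r + (1/6)(q−1)^(2r) + (1/3)(q^2+q+1)^r, −(1/2)(q^2−1)^r + (1/6)(q−1)^(2r) + (1/3)(q^2+q+1)^r, (1/3)((q−1)^(2r) − (q^2+q+1)^r)). -/
/-- Multiplication on triples `(a,b,c)` encoding `a·T + b·S + c·V` in the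
representation ring `R(Σ₃)` (tensored with a commutative ring `K`), determined
by `T⊗T=T`, `T⊗S=S`, `T⊗V=V`, `S⊗S=T`, `S⊗V=V`, `V⊗V=T⊕S⊕V`. -/
def tmul {K : Type*} [CommRing K] : K × K × K → K × K × K → K × K × K :=
  fun x y =>
    (x.1 * y.1 + x.2.1 * y.2.1 + x.2.2 * y.2.2,
     x.1 * y.2.1 + y.1 * x.2.1 + x.2.2 * y.2.2,
     x.1 * y.2.2 + y.1 * x.2.2 + x.2.1 * y.2.2 + y.2.1 * x.2.2 + x.2.2 * y.2.2)

/-- Powers in the ring of triples, with unit `(1,0,0)` (the trivial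
representation `T`). -/
def tpow {K : Type*} [CommRing K] (x : K × K × K) : ℕ → K × K × K
  | 0 => (1, 0, 0)
  | n + 1 => tmul x (tpow x n)

/-! Taking characters is a ring homomorphism from `R(Σ₃) ⊗ K` to `K³`, the class functions on
the three conjugacy classes of `Σ₃`, and it is injective once `2` and `3` are invertible in `K`. The torus element
has character `((q - 1)², q² - 1, q² + q + 1)`, so its `r`-th power has character
`((q - 1)^(2r), (q² - 1)^r, (q² + q + 1)^r)`, and the claimed coefficients come from
inverting the character table of `Σ₃`. -/

section CharacterTable

variable {K : Type*}

/-- The character of `a·T + b·S + c·V` at the classes of `1`, `(1 2)` and `(1 2 3)`. -/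
def character [CommRing K] (x : K × K × K) : K × K × K :=
  (x.1 + x.2.1 + 2 * x.2.2, x.1 - x.2.1, x.1 + x.2.1 - x.2.2)

theorem character_tmul [CommRing K] (x y : K × K × K) :
    character (tmul x y) = character x * character y := by
  ext <;> simp only [character, tmul, Prod.fst_mul, Prod.snd_mul] <;> ring

theorem character_tpow [CommRing K] (x : K × K × K) (n : ℕ) :
    character (tpow x n) = character x ^ n := by
  induction n with
  | zero => ext <;> simp [character, tpow]
  | succ n ih => rw [tpow, character_tmul, ih, pow_succ']

theorem eq_of_character_eq [Field K] (h2 : (2 : K) ≠ 0) (h3 : (3 : K) ≠ 0)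
    {x : K × K × K} {u v w : K} (h : character x = (u, v, w)) :
    x = ((1/2) * v + (1/6) * u + (1/3) * w, -(1/2) * v + (1/6) * u + (1/3) * w,
      (1/3) * (u - w)) := by
  have h6 : (6 : K) ≠ 0 := by
    simpa only [show (2 : K) * 3 = 6 by norm_num] using mul_ne_zero h2 h3
  simp only [character, Prod.mk.injEq] at h
  obtain ⟨rfl, rfl, rfl⟩ := h
  ext <;> field_simp <;> ring

end CharacterTable

/-- The `r`-th power of the element `(q², 1, −q)` (the `Σ₃`-equivariant
E-polynomial of the torus `{(λ,μ,γ) ∈ (ℂ*)³ : λμγ = 1}`) in the representation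
ring of `Σ₃` with coefficients in `ℚ(q)`. -/
theorem tpow_equivariant_torus (r : ℕ) :
    tpow ((RatFunc.X^2, 1, -RatFunc.X) : RatFunc ℚ × RatFunc ℚ × RatFunc ℚ) r
      = ((1/2) * (RatFunc.X^2 - 1)^r + (1/6) * (RatFunc.X - 1)^(2*r)
            + (1/3) * (RatFunc.X^2 + RatFunc.X + 1)^r,
         -(1/2) * (RatFunc.X^2 - 1)^r + (1/6) * (RatFunc.X - 1)^(2*r)
            + (1/3) * (RatFunc.X^2 + RatFunc.X + 1)^r,
         (1/3) * ((RatFunc.X - 1)^(2*r) - (RatFunc.X^2 + RatFunc.X + 1)^r)) := by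
  set q : RatFunc ℚ := RatFunc.X
  have h_torus : character ((q^2, 1, -q) : RatFunc ℚ × RatFunc ℚ × RatFunc ℚ)
      = ((q - 1)^2, q^2 - 1, q^2 + q + 1) := by
    ext <;> simp only [character] <;> ring
  apply eq_of_character_eq two_ne_zero three_ne_zero
  rw [character_tpow, h_torus, Prod.pow_mk, Prod.pow_mk, pow_mul]
end

section
/- Define on triples (a,b,c) ∈ ℤ^3 the commutative ring structure with componentwise addition, unit (1,0,0), and multiplication (a,b,c)·(a',b',c') = (a a' + b b' + c c', a b' + a' b + c c', a c' + a' c + b c' + b' c + c c'). Let a : ℕ → ℤ be the sequence with a(0) = 0, a(1) = 1 and a(b+2) = a(b+1) + 2·a(b). Then for every integer b ≥ 1, the b-th power of the element (0,0,1) in this ring equals (a(b−1), a(b−1), a(b)). -/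
section VPowers

variable {K : Type*} [CommRing K]

theorem tpow_succ (x : K × K × K) (n : ℕ) : tpow x (n + 1) = tmul x (tpow x n) := rfl

theorem tpow_one (x : K × K × K) : tpow x 1 = x := by
  simp only [tpow, tmul]
  ext <;> simp

-- `V` maps the span of `T + S` and `V` to itself: `V·(T + S) = 2V` and `V·V = V + (T + S)`.
theorem tmul_V_diag (x y : K) : tmul (0, 0, 1) (x, x, y) = (y, y, y + 2 * x) := by
  simp only [tmul]
  ext <;> simp only <;> ring

end VPowers

/-- The identity `V^b = a_{b-1}·T + a_{b-1}·S + a_b·V` in `R(Σ₃)`, where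
`a_b` satisfies `a_0 = 0`, `a_1 = 1`, `a_{b+2} = a_{b+1} + 2·a_b`. -/
theorem tpow_V (a : ℕ → ℤ) (ha0 : a 0 = 0) (ha1 : a 1 = 1)
    (harec : ∀ b : ℕ, a (b + 2) = a (b + 1) + 2 * a b)
    (b : ℕ) (hb : 1 ≤ b) :
    tpow ((0, 0, 1) : ℤ × ℤ × ℤ) b = (a (b - 1), a (b - 1), a b) := by
  induction b, hb using Nat.le_induction with
  | base => simp [tpow_one, ha0, ha1]
  | succ n hn ih =>
    obtain ⟨m, rfl⟩ := Nat.exists_eq_add_of_le' hn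
    rw [tpow_succ, ih, tmul_V_diag]
    simp only [Nat.add_sub_cancel, harec]
end

section
/- For every integer r ≥ 1, the following identity holds in ℚ(q): 1 + ((1/2)(q^2−q)(q+1)^r + (1/2)(q^2+q)(q−1)^r − q^2) + (q^r−1)(q+1) + ((q^(r−1)−1)/(q−1))·((q−1)^r − 1)·(q^3−q) = (1/2)(q^2−q)(q+1)^r + (1/2)(q^2+q)(q−1)^r + (q^(r−1)−1)(q−1)^(r−1)(q^3−q). (This shows that the E-polynomial of the reducible locus of Hom(F_r, PGL(2,ℂ)), computed as the sum of its four strata, equals the E-polynomial of the reducible locus of Hom(F_r, SL(2,ℂ)).) -/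
theorem q_ne_one : q ≠ 1 := by
  intro h
  have hX : (Polynomial.X : Polynomial ℚ) = Polynomial.C 1 :=
    RatFunc.algebraMap_injective ℚ (by simpa [q, RatFunc.algebraMap_X] using h)
  exact Polynomial.X_ne_C 1 hX

section Field

variable {K : Type*} [Field K]

theorem geom_quotient_mul_sub_one_mul_cube_sub {x : K} (hx : x ≠ 1) (n : ℕ) :
    (x ^ n - 1) / (x - 1) * ((x - 1) ^ (n + 1) - 1) * (x ^ 3 - x)
      = (x ^ n - 1) * (x - 1) ^ n * (x ^ 3 - x) - (x ^ (n + 1) - x) * (x + 1) := by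
  have hx' : x - 1 ≠ 0 := sub_ne_zero.mpr hx
  field_simp
  ring

theorem reducible_strata_sum_eq {x : K} (hx : x ≠ 1) (r : ℕ) (hr : 1 ≤ r) :
    1 + ((1/2) * (x^2 - x) * (x + 1)^r + (1/2) * (x^2 + x) * (x - 1)^r - x^2)
      + (x^r - 1) * (x + 1)
      + ((x^(r-1) - 1) / (x - 1)) * ((x - 1)^r - 1) * (x^3 - x)
    = (1/2) * (x^2 - x) * (x + 1)^r + (1/2) * (x^2 + x) * (x - 1)^r
      + (x^(r-1) - 1) * (x - 1)^(r-1) * (x^3 - x) := by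
  obtain ⟨n, rfl⟩ := Nat.exists_eq_add_of_le' hr
  rw [Nat.add_sub_cancel, geom_quotient_mul_sub_one_mul_cube_sub hx]
  ring

end Field

/-- The E-polynomial of the reducible locus of `Hom(F_r, PGL(2,ℂ))`, computed
as the sum of its four strata, equals the E-polynomial of the reducible locus
of `Hom(F_r, SL(2,ℂ))`. -/
theorem e_reducible_pgl2_eq_sl2 (r : ℕ) (hr : 1 ≤ r) :
    (1:RatFunc ℚ)
      + ((1/2) * (q^2 - q) * (q + 1)^r + (1/2) * (q^2 + q) * (q - 1)^r - q^2)
      + (q^r - 1) * (q + 1)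
      + ((q^(r-1) - 1) / (q - 1)) * ((q - 1)^r - 1) * (q^3 - q)
    = (1/2) * (q^2 - q) * (q + 1)^r + (1/2) * (q^2 + q) * (q - 1)^r
      + (q^(r-1) - 1) * (q - 1)^(r-1) * (q^3 - q) :=
  reducible_strata_sum_eq q_ne_one r hr
end
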